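/- arXiv:1709.09162 — 16 statements merged into one kernel-verified Lean document; each statement's English description precedes it below -/
import Mathlib

section
/- If F : X × X → X is associative and quasitrivial (i.e., F(x,y) ∈ {x,y} for all x,y), then the binary relation ≾ on X defined by x ≾ y iff F(x,y) = y or F(y,x) = y is a weak ordering (total and transitive). -/
theorem stmt_0 {X : Type*} [Nonempty X] (F : X → X → X)
    (hassoc : ∀ x y z, F (F x y) z = F x (F y z))
    (hqt : ∀ x y, F x y = x ∨ F x y = y) :
    (∀ x y, (F x y = y ∨ F y x = y) ∨ (F y x = x ∨ F x y = x)) ∧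
      Transitive (fun x y => F x y = y ∨ F y x = y) := by
  constructor
  · intro x y
    rcases hqt x y with h | h
    · right; right; exact h
    · left; left; exact h
  · intro x y z hxy hyz
    rcases hqt x z with hxz | hxz
    · rcases hqt z x with hzx | hzx
      · right; exact hzx
      · -- hard case: F x z = x, F z x = x
        rcases hxy with h1 | h1 <;> rcases hyz with h2 | h2
        · left
          calc F x z = F x (F y z) := by rw [h2]
            _ = F (F x y) z := (hassoc _ _ _).symm
            _ = F y z := by rw [h1]
            _ = z := h2
        · -- h1 : F x y = y, h2 : F z y = z
          have hzy : z = y := by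
            have e2 : F z (F x y) = F x y := by rw [← hassoc, hzx]
            rw [h1, h2] at e2; exact e2
          subst hzy; left; exact h1
        · -- h1 : F y x = y, h2 : F y z = z
          have hzy : z = y := by
            have e2 : F (F y x) z = F y x := by rw [hassoc, hxz]
            rw [h1, h2] at e2; exact e2
          subst hzy; right; exact h1
        · -- h1 : F y x = y, h2 : F z y = z
          have hzx2 : z = x := by
            have e2 : F z (F y x) = x := by rw [← hassoc, h2, hzx]
            rw [h1, h2] at e2; exact e2
          subst hzx2; left
          exact (hqt _ _).elim id id
    · left; exact hxz
end

section
/- If F : X × X → X is associative and quasitrivial, and x, y, z ∈ X are pairwise distinct with x ∼ y ∼ z (where ∼ is the symmetric part of the weak ordering ≾ defined by x ≾ y iff F(x,y)=y or F(y,x)=y), then it cannot be that both F restricted to {x,y}² is the first projection and F restricted to {x,z}² is the second projection. -/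
theorem stmt_1 {X : Type*} [Nonempty X] (F : X → X → X)
    (hassoc : ∀ x y z, F (F x y) z = F x (F y z))
    (hqt : ∀ x y, F x y = x ∨ F x y = y)
    (x y z : X) (hxy : x ≠ y) (hxz : x ≠ z) (hyz : y ≠ z)
    (hsim1 : (F x y = y ∨ F y x = y) ∧ (F y x = x ∨ F x y = x))
    (hsim2 : (F y z = z ∨ F z y = z) ∧ (F z y = y ∨ F y z = y)) :
    ¬ ((∀ a b, a ∈ ({x, y} : Set X) → b ∈ ({x, y} : Set X) → F a b = a) ∧
       (∀ a b, a ∈ ({x, z} : Set X) → b ∈ ({x, z} : Set X) → F a b = b)) := by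
  rintro ⟨h1, h2⟩
  have hxyx : F x y = x := h1 x y (by simp) (by simp)
  have hyxy : F y x = y := h1 y x (by simp) (by simp)
  have hxzz : F x z = z := h2 x z (by simp) (by simp)
  have hzxx : F z x = x := h2 z x (by simp) (by simp)
  rcases hqt y z with hy | hz
  · have h := hassoc x y z
    rw [hxyx, hy, hxyx, hxzz] at h
    exact hxz h.symm
  · have h := hassoc y z x
    rw [hz, hzxx, hyxy] at h
    exact hxy h
end

section
/- A function F : X × X → X is associative, quasitrivial, and commutative if and only if there exists a total (linear) ordering ⪯ on X such that F(x,y) = max_⪯(x,y) for all x,y ∈ X. -/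
/-!
Setting `x ⪯ y :⇔ F x y = y`, quasitriviality gives reflexivity, associativity transitivity,
commutativity antisymmetry, and quasitriviality with commutativity totality. Conversely, if `F`
picks the larger element of a linear order `r`, then `F x y` is the least upper bound of `x`
and `y`, so `F (F x y) z` and `F x (F y z)` have the same upper bounds, namely those of
`{x, y, z}`, and are therefore equal.
-/

section FromOperation

variable {X : Type*} {F : X → X → X}

theorem isLinearOrder_of_assoc_of_comm (hassoc : ∀ x y z, F (F x y) z = F x (F y z))
    (hqt : ∀ x y, F x y = x ∨ F x y = y) (hcomm : ∀ x y, F x y = F y x) :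
    IsLinearOrder X (fun x y => F x y = y) where
  refl x := (hqt x x).elim id id
  trans x y z hxy hyz := by rw [← hyz, ← hassoc, hxy]
  antisymm x y hxy hyx := by rw [← hyx, hcomm, hxy]
  total x y := (hqt x y).symm.imp id fun h => (hcomm y x).trans h

end FromOperation

section FromOrder

variable {X : Type*} {r : X → X → Prop} [IsLinearOrder X r] {F : X → X → X}
  (hle : ∀ x y, r x y → F x y = y) (hge : ∀ x y, r y x → F x y = x)
include hle hge

theorem eq_or_eq_of_forall_rel (x y : X) : F x y = x ∨ F x y = y :=
  (total_of r x y).elim (fun h => .inr (hle x y h)) fun h => .inl (hge x y h)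

theorem comm_of_forall_rel (x y : X) : F x y = F y x := by
  rcases total_of r x y with h | h
  · rw [hle x y h, hge y x h]
  · rw [hge x y h, hle y x h]

theorem rel_iff_of_forall_rel (x y z : X) : r (F x y) z ↔ r x z ∧ r y z := by
  rcases total_of r x y with h | h
  · rw [hle x y h]
    exact ⟨fun hyz => ⟨trans_of r h hyz, hyz⟩, And.right⟩
  · rw [hge x y h]
    exact ⟨fun hxz => ⟨hxz, trans_of r h hxz⟩, And.left⟩

theorem assoc_of_forall_rel (x y z : X) : F (F x y) z = F x (F y z) := by
  have same_upper_bounds : ∀ w, r (F (F x y) z) w ↔ r (F x (F y z)) w := by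
    intro w
    simp only [rel_iff_of_forall_rel hle hge, and_assoc]
  exact antisymm ((same_upper_bounds _).mpr (refl _)) ((same_upper_bounds _).mp (refl _))

end FromOrder

theorem stmt_2_general {X : Type*} (F : X → X → X) :
    ((∀ x y z, F (F x y) z = F x (F y z)) ∧
     (∀ x y, F x y = x ∨ F x y = y) ∧
     (∀ x y, F x y = F y x)) ↔
    ∃ r : X → X → Prop, IsLinearOrder X r ∧
      (∀ x y, r x y → F x y = y) ∧ (∀ x y, r y x → F x y = x) := by
  constructor
  · rintro ⟨hassoc, hqt, hcomm⟩
    exact ⟨fun x y => F x y = y, isLinearOrder_of_assoc_of_comm hassoc hqt hcomm,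
      fun _ _ h => h, fun x y h => (hcomm x y).trans h⟩
  · rintro ⟨r, hr, hle, hge⟩
    exact ⟨assoc_of_forall_rel hle hge, eq_or_eq_of_forall_rel hle hge,
      comm_of_forall_rel hle hge⟩

theorem stmt_2 {X : Type*} [Nonempty X] (F : X → X → X) :
    ((∀ x y z, F (F x y) z = F x (F y z)) ∧
     (∀ x y, F x y = x ∨ F x y = y) ∧
     (∀ x y, F x y = F y x)) ↔
    ∃ r : X → X → Prop, IsLinearOrder X r ∧
      (∀ x y, r x y → F x y = y) ∧ (∀ x y, r y x → F x y = x) :=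
  stmt_2_general F
end

section
/- Let ≤ be a total ordering on X. If F : X × X → X is quasitrivial, commutative, and ≤-preserving (monotone in each variable with respect to ≤), then F is associative. -/
theorem stmt_3 {X : Type*} [Nonempty X] [LinearOrder X] (F : X → X → X)
    (hqt : ∀ x y, F x y = x ∨ F x y = y)
    (hcomm : ∀ x y, F x y = F y x)
    (hmono : ∀ x x' y y', x ≤ x' → y ≤ y' → F x y ≤ F x' y') :
    ∀ x y z, F (F x y) z = F x (F y z) := by
  have hidem : ∀ x, F x x = x := fun x => by rcases hqt x x with h | h <;> exact h
  have A1 : ∀ x y z : X, x ≤ y → y ≤ z → F x z = z → F y z = z := by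
    intro x y z hxy hyz h
    have h1 : z ≤ F y z := by
      calc z = F x z := h.symm
        _ ≤ F y z := hmono x y z z hxy le_rfl
    have h2 : F y z ≤ z := by
      calc F y z ≤ F z z := hmono y z z z hyz le_rfl
        _ = z := hidem z
    exact le_antisymm h2 h1
  have A2 : ∀ x y z : X, x ≤ y → y ≤ z → F x z = x → F x y = x := by
    intro x y z hxy hyz h
    have h1 : F x y ≤ x := by
      calc F x y ≤ F x z := hmono x x y z le_rfl hyz
        _ = x := h
    have h2 : x ≤ F x y := by
      calc x = F x x := (hidem x).symm
        _ ≤ F x y := hmono x x x y le_rfl hxy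
    exact le_antisymm h1 h2
  have htr : ∀ a b c : X, F a b = b → F b c = c → F a c = c := by
    intro a b c hab hbc
    rcases hqt a c with hac | hac
    · -- F a c = a : show a = c, then done
      have key : a = c := by
        rcases le_total a c with h1 | h1
        · rcases le_total b c with h2 | h2
          · rcases le_total a b with h3 | h3
            · -- a ≤ b ≤ c
              have h4 := A2 a b c h3 h2 hac
              have hab2 : a = b := h4.symm.trans hab
              rw [hab2] at hac ⊢
              exact hac.symm.trans hbc
            · -- b ≤ a ≤ c
              have h4 := A1 b a c h3 h1 hbc
              exact hac.symm.trans h4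
          · -- a ≤ c ≤ b
            have h4 := A1 a c b h1 h2 hab
            have hbc' : F c b = c := (hcomm c b).trans hbc
            have hbceq : b = c := h4.symm.trans hbc'
            rw [hbceq] at hab
            exact hac.symm.trans hab
        · rcases le_total b a with h2 | h2
          · rcases le_total c b with h3 | h3
            · -- c ≤ b ≤ a
              have h4 := A1 c b a h3 h2 ((hcomm c a).trans hac)
              have hab2 : a = b := h4.symm.trans ((hcomm b a).trans hab)
              rw [hab2] at hac ⊢
              exact hac.symm.trans hbc
            · -- b ≤ c ≤ a
              have h4 := A2 b c a h3 h1 ((hcomm b a).trans hab)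
              have hbceq : b = c := h4.symm.trans hbc
              rw [← hbceq] at hac ⊢
              exact hac.symm.trans hab
          · -- c ≤ a ≤ b
            have h4 := A2 c a b h1 h2 ((hcomm c b).trans hbc)
            have hac' : F c a = a := (hcomm c a).trans hac
            exact (h4.symm.trans hac').symm
      rw [← key] at hac ⊢
      exact hac
    · exact hac
  intro x y z
  rcases hqt x y with hxy | hxy <;> rcases hqt y z with hyz | hyz
  · -- F x y = x, F y z = y
    have hzy : F z y = y := (hcomm z y).trans hyz
    have hyx : F y x = x := (hcomm y x).trans hxy
    have hzx : F z x = x := htr z y x hzy hyx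
    rw [hxy, hyz, hxy]
    exact (hcomm x z).trans hzx
  · rw [hxy, hyz]
  · rw [hxy, hyz, hxy]
  · rw [hxy, hyz]
    exact (htr x y z hxy hyz).symm
end

section
/- Let ≤ be a total ordering on X. If F : X × X → X is associative, idempotent, ≤-preserving, and has a neutral element e (i.e., F(x,e)=F(e,x)=x for all x), then F is quasitrivial. -/
theorem stmt_4 {X : Type*} [Nonempty X] [LinearOrder X] (F : X → X → X) (e : X)
    (hassoc : ∀ x y z, F (F x y) z = F x (F y z))
    (hidem : ∀ x, F x x = x)
    (hmono : ∀ x x' y y', x ≤ x' → y ≤ y' → F x y ≤ F x' y')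
    (hneutral : ∀ x, F x e = x ∧ F e x = x) :
    ∀ x y, F x y = x ∨ F x y = y := by
  intro x y
  have hxa : F x (F x y) = F x y := by rw [← hassoc, hidem]
  have hay : F (F x y) y = F x y := by rw [hassoc, hidem]
  rcases le_total x y with hxy | hyx
  · rcases le_total y e with hye | hey
    · -- x ≤ y ≤ e, F x y = x
      left
      have h1 : F x y ≤ x := by
        have := hmono x x y e le_rfl hye
        rwa [(hneutral x).1] at this
      have h2 : x ≤ F x y := by
        have := hmono x x x y le_rfl hxy
        rwa [hidem] at this
      exact le_antisymm h1 h2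
    · rcases le_total e x with hex | hxe
      · -- e ≤ x ≤ y, F x y = y
        right
        have h1 : y ≤ F x y := by
          have := hmono e x y y hex le_rfl
          rwa [(hneutral y).2] at this
        have h2 : F x y ≤ y := by
          have := hmono x y y y hxy le_rfl
          rwa [hidem] at this
        exact le_antisymm h2 h1
      · -- x ≤ e ≤ y
        have hxa' : x ≤ F x y := by
          have := hmono x x x y le_rfl hxy
          rwa [hidem] at this
        have hay' : F x y ≤ y := by
          have := hmono x y y y hxy le_rfl
          rwa [hidem] at this
        rcases le_total (F x y) e with hae | hea
        · left
          have : F x (F x y) ≤ x := by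
            have := hmono x x (F x y) e le_rfl hae
            rwa [(hneutral x).1] at this
          rw [hxa] at this
          exact le_antisymm this hxa'
        · right
          have : y ≤ F (F x y) y := by
            have := hmono e (F x y) y y hea le_rfl
            rwa [(hneutral y).2] at this
          rw [hay] at this
          exact le_antisymm hay' this
  · rcases le_total x e with hxe | hex
    · -- y ≤ x ≤ e, F x y = y
      right
      have h1 : F x y ≤ y := by
        have := hmono x e y y hxe le_rfl
        rwa [(hneutral y).2] at this
      have h2 : y ≤ F x y := by
        have := hmono y x y y hyx le_rfl
        rwa [hidem] at this
      exact le_antisymm h1 h2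
    · rcases le_total e y with hey | hye
      · -- e ≤ y ≤ x, F x y = x
        left
        have h1 : x ≤ F x y := by
          have := hmono x x e y le_rfl hey
          rwa [(hneutral x).1] at this
        have h2 : F x y ≤ x := by
          have := hmono x x y x le_rfl hyx
          rwa [hidem] at this
        exact le_antisymm h2 h1
      · -- y ≤ e ≤ x
        have hya : y ≤ F x y := by
          have := hmono y x y y hyx le_rfl
          rwa [hidem] at this
        have hax : F x y ≤ x := by
          have := hmono x x y x le_rfl hyx
          rwa [hidem] at this
        rcases le_total (F x y) e with hae | hea
        · right
          have : F (F x y) y ≤ y := by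
            have := hmono (F x y) e y y hae le_rfl
            rwa [(hneutral y).2] at this
          rw [hay] at this
          exact le_antisymm this hya
        · left
          have : x ≤ F x (F x y) := by
            have := hmono x x e (F x y) le_rfl hea
            rwa [(hneutral x).1] at this
          rw [hxa] at this
          exact le_antisymm hax this
end

section
/- Let ≤ be a total ordering on X and ⪯ a total ordering on X, and set F = max_⪯. Then F is ≤-preserving if and only if ⪯ is single-peaked for ≤, i.e., for all a,b,c ∈ X with a < b < c (in ≤), we have b ≺ a or b ≺ c. -/
theorem stmt_5 {X : Type*} [Nonempty X] [LinearOrder X]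
    (r : X → X → Prop) (hr : IsLinearOrder X r)
    (F : X → X → X)
    (hF : ∀ x y, (r x y → F x y = y) ∧ (r y x → F x y = x)) :
    (∀ x x' y y', x ≤ x' → y ≤ y' → F x y ≤ F x' y') ↔
      (∀ a b c, a < b → b < c → (r b a ∧ ¬ r a b) ∨ (r b c ∧ ¬ r c b)) := by
  have htot : ∀ a b, r a b ∨ r b a := hr.total
  have htrans : ∀ {a b c}, r a b → r b c → r a c := fun h1 h2 => hr.trans _ _ _ h1 h2
  have Ftot : ∀ x y, F x y = x ∨ F x y = y := by
    intro x y
    rcases htot x y with h | h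
    · exact Or.inr ((hF x y).1 h)
    · exact Or.inl ((hF x y).2 h)
  -- if the max is y and x ≠ y then x ≺ y strictly
  have key : ∀ x y, F x y = y → x ≠ y → r x y ∧ ¬ r y x := by
    intro x y hxy hne
    have hrxy : r x y := by
      rcases htot x y with h | h
      · exact h
      · exact absurd (((hF x y).2 h).symm.trans hxy) hne
    refine ⟨hrxy, fun h => hne (((hF x y).2 h).symm.trans hxy)⟩
  -- if the max is x and x ≠ y then y ≺ x strictly
  have key2 : ∀ x y, F x y = x → x ≠ y → r y x ∧ ¬ r x y := by
    intro x y hxy hne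
    have hryx : r y x := by
      rcases htot x y with h | h
      · exact absurd (((hF x y).1 h).symm.trans hxy).symm hne
      · exact h
    refine ⟨hryx, fun h => hne (((hF x y).1 h).symm.trans hxy).symm⟩
  constructor
  · intro hmono a b c hab hbc
    by_contra hcon
    push_neg at hcon
    obtain ⟨h1, h2⟩ := hcon
    have hrab : r a b := (htot a b).elim id h1
    have hrcb : r c b := (htot b c).elim h2 id
    have hFab : F a b = b := (hF a b).1 hrab
    have hFbc : F b c = b := (hF b c).2 hrcb
    have h1' : F a b ≤ F a c := hmono a a b c le_rfl hbc.le
    have h2' : F a c ≤ F b c := hmono a b c c hab.le le_rfl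
    rcases htot a c with h | h
    · have hac : F a c = c := (hF a c).1 h
      rw [hac, hFbc] at h2'
      exact absurd h2' (not_le.mpr hbc)
    · have hac : F a c = a := (hF a c).2 h
      rw [hFab, hac] at h1'
      exact absurd h1' (not_le.mpr hab)
  · intro hsp x x' y y' hx hy
    by_contra hlt
    push_neg at hlt
    rcases Ftot x y with hm | hm
    · -- F x y = x
      rcases Ftot x' y' with hm' | hm'
      · rw [hm, hm'] at hlt
        exact absurd hlt (not_lt.mpr hx)
      · rw [hm, hm'] at hlt
        -- hlt : y' < x, so y ≤ y' < x ≤ x'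
        have hy'x : y' < x := hlt
        have hy'x' : y' < x' := hy'x.trans_le hx
        have hyx : y < x := lt_of_le_of_lt hy hy'x
        obtain ⟨hr1, hn1⟩ := key x' y' hm' hy'x'.ne'
        obtain ⟨hr2, hn2⟩ := key2 x y hm hyx.ne'
        -- derive x ≺ y' strictly
        have hxy' : r x y' ∧ ¬ r y' x := by
          rcases hx.eq_or_lt with heq | hlt'
          · subst heq; exact ⟨hr1, hn1⟩
          · rcases hsp y' x x' hy'x hlt' with ⟨ha, hb⟩ | ⟨ha, hb⟩
            · exact ⟨ha, hb⟩
            · exact ⟨htrans ha hr1, fun h => hb (htrans hr1 h)⟩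
        rcases hy.eq_or_lt with heq | hlt'
        · subst heq; exact hn2 hxy'.1
        · rcases hsp y y' x hlt' hy'x with ⟨ha, hb⟩ | ⟨ha, hb⟩
          · exact hb (htrans hr2 hxy'.1)
          · exact hxy'.2 ha
    · -- F x y = y
      rcases Ftot x' y' with hm' | hm'
      · rw [hm, hm'] at hlt
        -- hlt : x' < y, so x ≤ x' < y ≤ y'
        have hx'y : x' < y := hlt
        have hx'y' : x' < y' := hx'y.trans_le hy
        have hxy : x < y := lt_of_le_of_lt hx hx'y
        obtain ⟨hr1, hn1⟩ := key2 x' y' hm' hx'y'.ne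
        obtain ⟨hr2, hn2⟩ := key x y hm hxy.ne
        -- derive y ≺ x' strictly
        have hyx' : r y x' ∧ ¬ r x' y := by
          rcases hy.eq_or_lt with heq | hlt'
          · subst heq; exact ⟨hr1, hn1⟩
          · rcases hsp x' y y' hx'y hlt' with ⟨ha, hb⟩ | ⟨ha, hb⟩
            · exact ⟨ha, hb⟩
            · exact ⟨htrans ha hr1, fun h => hn1 (htrans h ha)⟩
        rcases hx.eq_or_lt with heq | hlt'
        · subst heq; exact hn2 hyx'.1
        · rcases hsp x x' y hlt' hx'y with ⟨ha, hb⟩ | ⟨ha, hb⟩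
          · exact hb (htrans hr2 hyx'.1)
          · exact hyx'.2 ha
      · rw [hm, hm'] at hlt
        exact absurd hlt (not_lt.mpr hy)
end

section
/- For each n ≥ 1, the number of total orderings on the set {1,…,n} that are single-peaked for the standard ordering ≤ is exactly 2^(n-1). -/
open Finset

namespace SP6

variable {m : ℕ}

/-- Left endpoint of the interval at step `k`. -/
def Lf (b : Fin m → Bool) (k : ℕ) : ℕ :=
  (univ.filter (fun j : Fin m => k ≤ (j : ℕ) ∧ b j = true)).card

lemma Lf_anti (b : Fin m → Bool) {j k : ℕ} (h : j ≤ k) : Lf b k ≤ Lf b j := by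
  apply card_le_card
  intro x hx
  simp only [mem_filter, mem_univ, true_and] at hx ⊢
  exact ⟨le_trans h hx.1, hx.2⟩

lemma Lf_zero (b : Fin m → Bool) {k : ℕ} (h : m ≤ k) : Lf b k = 0 := by
  rw [Lf, card_eq_zero]
  ext j
  simp only [mem_filter, mem_univ, true_and, notMem_empty, iff_false, not_and]
  intro hj
  have := j.isLt
  omega

lemma Lf_add_le (b : Fin m → Bool) {k : ℕ} (hk : k ≤ m) : Lf b k + k ≤ m := by
  rcases eq_or_lt_of_le hk with rfl | hk
  · simp [Lf_zero b le_rfl]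
  · have : Lf b k ≤ (Finset.Ici (⟨k, hk⟩ : Fin m)).card := by
      apply card_le_card
      intro x hx
      simp only [mem_filter, mem_univ, true_and] at hx
      simp only [mem_Ici, Fin.le_def]
      exact hx.1
    rw [Fin.card_Ici] at this
    simp only [Fin.val_mk] at this
    omega

lemma Lf_step (b : Fin m → Bool) {k : ℕ} (hk : k < m) :
    Lf b k = Lf b (k + 1) + (if b ⟨k, hk⟩ = true then 1 else 0) := by
  by_cases hb : b ⟨k, hk⟩ = true
  · rw [if_pos hb]
    have : (univ.filter (fun j : Fin m => k ≤ (j : ℕ) ∧ b j = true)) =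
        insert ⟨k, hk⟩ (univ.filter (fun j : Fin m => k + 1 ≤ (j : ℕ) ∧ b j = true)) := by
      ext j
      simp only [mem_filter, mem_univ, true_and, mem_insert]
      constructor
      · rintro ⟨h1, h2⟩
        rcases eq_or_lt_of_le h1 with h | h
        · left; exact Fin.ext h.symm
        · right; exact ⟨h, h2⟩
      · rintro (rfl | ⟨h1, h2⟩)
        · exact ⟨le_rfl, hb⟩
        · exact ⟨by omega, h2⟩
    rw [Lf, this, card_insert_of_notMem, Lf]
    simp only [mem_filter, mem_univ, true_and, not_and]
    intro h; omega
  · rw [if_neg hb]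
    have : (univ.filter (fun j : Fin m => k ≤ (j : ℕ) ∧ b j = true)) =
        (univ.filter (fun j : Fin m => k + 1 ≤ (j : ℕ) ∧ b j = true)) := by
      ext j
      simp only [mem_filter, mem_univ, true_and]
      constructor
      · rintro ⟨h1, h2⟩
        rcases eq_or_lt_of_le h1 with h | h
        · exact absurd (by rw [show j = ⟨k, hk⟩ from Fin.ext h.symm] at h2; exact h2) hb
        · exact ⟨h, h2⟩
      · rintro ⟨h1, h2⟩; exact ⟨by omega, h2⟩
    rw [Lf, this, Lf]; omega

lemma Lf_step_le (b : Fin m → Bool) (k : ℕ) : Lf b k ≤ Lf b (k + 1) + 1 := by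
  by_cases hk : k < m
  · rw [Lf_step b hk]; split <;> omega
  · rw [Lf_zero b (by omega)]; omega

lemma Lf_diff (b : Fin m → Bool) {j k : ℕ} (h : j ≤ k) : Lf b j ≤ Lf b k + (k - j) := by
  induction k with
  | zero =>
    have : j = 0 := by omega
    subst this
    simp
  | succ k ih =>
    rcases eq_or_lt_of_le h with rfl | h
    · omega
    · have h1 := ih (by omega)
      have h2 := Lf_step_le b k
      omega

lemma Lf_true (b : Fin m → Bool) {k : ℕ} (hk : k < m) (hb : b ⟨k, hk⟩ = true)
    {j : ℕ} (h : j ≤ k) : Lf b (k + 1) + 1 ≤ Lf b j := by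
  have h1 := Lf_step b hk
  rw [if_pos hb] at h1
  have h2 := Lf_anti b h
  omega

lemma Lf_false (b : Fin m → Bool) {k : ℕ} (hk : k < m) (hb : b ⟨k, hk⟩ = false)
    {j : ℕ} (h : j ≤ k) : Lf b j ≤ Lf b (k + 1) + (k - j) := by
  have h1 := Lf_step b hk
  rw [if_neg (by simp [hb])] at h1
  have h2 := Lf_diff b h
  omega

/-- Membership of `x` in the interval at step `k`. -/
def Mem (b : Fin m → Bool) (k : ℕ) (x : Fin (m + 1)) : Prop :=
  Lf b k ≤ (x : ℕ) ∧ (x : ℕ) ≤ Lf b k + k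

instance (b : Fin m → Bool) (k : ℕ) (x : Fin (m + 1)) : Decidable (Mem b k x) := by
  unfold Mem; infer_instance

lemma Mem_ex (b : Fin m → Bool) (x : Fin (m + 1)) : ∃ k, Mem b k x := by
  refine ⟨m, ?_, ?_⟩ <;> rw [Lf_zero b le_rfl] <;> omega

noncomputable def rho (b : Fin m → Bool) (x : Fin (m + 1)) : ℕ := Nat.find (Mem_ex b x)

lemma rho_mem (b : Fin m → Bool) (x : Fin (m + 1)) : Mem b (rho b x) x :=
  Nat.find_spec (Mem_ex b x)

lemma rho_le_of_mem {b : Fin m → Bool} {k : ℕ} {x : Fin (m + 1)} (h : Mem b k x) :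
    rho b x ≤ k := Nat.find_le h

lemma rho_notMem {b : Fin m → Bool} {k : ℕ} {x : Fin (m + 1)} (h : k < rho b x) :
    ¬ Mem b k x := Nat.find_min (Mem_ex b x) h

lemma rho_le (b : Fin m → Bool) (x : Fin (m + 1)) : rho b x ≤ m :=
  rho_le_of_mem (by refine ⟨?_, ?_⟩ <;> rw [Lf_zero b le_rfl] <;> omega)

lemma Mem_mono {b : Fin m → Bool} {k k' : ℕ} {x : Fin (m + 1)} (h : Mem b k x)
    (hkk : k ≤ k') : Mem b k' x := by
  obtain ⟨h1, h2⟩ := h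
  have h3 := Lf_anti b hkk
  have h4 := Lf_diff b hkk
  exact ⟨by omega, by omega⟩

lemma mem_iff_rho_le {b : Fin m → Bool} {k : ℕ} {x : Fin (m + 1)} :
    Mem b k x ↔ rho b x ≤ k :=
  ⟨rho_le_of_mem, fun h => Mem_mono (rho_mem b x) h⟩

lemma rho_inj (b : Fin m → Bool) : Function.Injective (rho b) := by
  intro x y h
  rcases hk : rho b x with _ | t
  · have hx := rho_mem b x
    have hy := rho_mem b y
    rw [hk] at hx
    rw [← h, hk] at hy
    obtain ⟨hx1, hx2⟩ := hx
    obtain ⟨hy1, hy2⟩ := hy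
    exact Fin.ext (by omega)
  · have hx := rho_mem b x
    have hy := rho_mem b y
    have hx' := rho_notMem (b := b) (x := x) (k := t) (by omega)
    have hy' := rho_notMem (b := b) (x := y) (k := t) (by rw [← h]; omega)
    rw [hk] at hx
    rw [h] at hk
    rw [hk] at hy
    have ht : t < m := by
      have := rho_le b y
      omega
    simp only [Mem, not_and, not_le] at hx' hy'
    obtain ⟨hx1, hx2⟩ := hx
    obtain ⟨hy1, hy2⟩ := hy
    have hstep := Lf_step b ht
    apply Fin.ext
    by_cases hb : b ⟨t, ht⟩ = true
    · rw [if_pos hb] at hstep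
      omega
    · rw [if_neg hb] at hstep
      omega

noncomputable def dec (b : Fin m → Bool) : Fin (m + 1) → Fin (m + 1) → Prop :=
  fun x y => rho b x ≤ rho b y

lemma dec_lin (b : Fin m → Bool) : IsLinearOrder (Fin (m + 1)) (dec b) :=
  { refl := fun a => le_refl _
    trans := fun a b' c => le_trans
    antisymm := fun a b' h1 h2 => rho_inj b (le_antisymm h1 h2)
    total := fun a b' => le_total _ _ }

lemma dec_sp (b : Fin m → Bool) : ∀ a c d : Fin (m + 1), a < c → c < d →
    (dec b c a ∧ ¬ dec b a c) ∨ (dec b c d ∧ ¬ dec b d c) := by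
  intro a c d hac hcd
  simp only [dec, not_le]
  by_contra hcon
  push_neg at hcon
  obtain ⟨h1, h2⟩ := hcon
  have ha : rho b a < rho b c := by
    rcases lt_or_ge (rho b a) (rho b c) with h | h
    · exact h
    · exact absurd (rho_inj b (le_antisymm (h1 h) h)) (ne_of_lt hac)
  have hd : rho b d < rho b c := by
    rcases lt_or_ge (rho b d) (rho b c) with h | h
    · exact h
    · exact absurd (rho_inj b (le_antisymm (h2 h) h)) (ne_of_gt hcd)
  have hc0 : rho b c ≠ 0 := by omega
  obtain ⟨t, ht⟩ : ∃ t, rho b c = t + 1 := ⟨rho b c - 1, by omega⟩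
  have hma : Mem b t a := mem_iff_rho_le.mpr (by omega)
  have hmd : Mem b t d := mem_iff_rho_le.mpr (by omega)
  have hmc : Mem b t c := by
    obtain ⟨ha1, ha2⟩ := hma
    obtain ⟨hd1, hd2⟩ := hmd
    have h3 : (a : ℕ) < (c : ℕ) := hac
    have h4 : (c : ℕ) < (d : ℕ) := hcd
    exact ⟨by omega, by omega⟩
  have := rho_le_of_mem hmc
  omega

section Rank

variable (r : Fin (m + 1) → Fin (m + 1) → Prop)

open scoped Classical in
/-- The rank of `x` in the order `r`: the number of elements strictly below it. -/
noncomputable def rk (x : Fin (m + 1)) : ℕ :=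
  (univ.filter (fun y => r y x ∧ ¬ r x y)).card

variable (hlin : IsLinearOrder (Fin (m + 1)) r)

include hlin

lemma rk_lt_of_s {x y : Fin (m + 1)} (h1 : r x y) (h2 : ¬ r y x) : rk r x < rk r y := by
  classical
  apply card_lt_card
  rw [ssubset_iff_of_subset]
  · exact ⟨x, by simp [h1, h2], by simp⟩
  · intro z hz
    simp only [mem_filter, mem_univ, true_and] at hz ⊢
    refine ⟨hlin.trans z x y hz.1 h1, fun hyz => hz.2 (hlin.trans x y z h1 hyz)⟩

lemma rk_le_iff {x y : Fin (m + 1)} : r x y ↔ rk r x ≤ rk r y := by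
  constructor
  · intro h
    by_cases h2 : r y x
    · rw [hlin.antisymm x y h h2]
    · exact le_of_lt (rk_lt_of_s r hlin h h2)
  · intro h
    by_contra h2
    rcases hlin.total x y with h3 | h3
    · exact h2 h3
    · exact absurd (rk_lt_of_s r hlin h3 h2) (by omega)

lemma rk_inj : Function.Injective (rk r) := by
  intro x y h
  exact hlin.antisymm x y ((rk_le_iff r hlin).mpr h.le) ((rk_le_iff r hlin).mpr h.ge)

lemma rk_le (x : Fin (m + 1)) : rk r x ≤ m := by
  classical
  have : (univ.filter (fun y => r y x ∧ ¬ r x y)) ⊆ univ.erase x := by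
    intro z hz
    simp only [mem_filter, mem_univ, true_and] at hz
    simp only [mem_erase, mem_univ, and_true]
    intro hzx
    subst hzx
    exact hz.2 hz.1
  have h2 := card_le_card this
  rwa [card_erase_of_mem (mem_univ x), card_univ, Fintype.card_fin] at h2

/-- The rank as a function to `Fin (m+1)`. -/
noncomputable def rkF (x : Fin (m + 1)) : Fin (m + 1) :=
  ⟨rk r x, Nat.lt_succ_of_le (rk_le r hlin x)⟩

lemma rkF_bij : Function.Bijective (rkF r hlin) := by
  rw [← Finite.injective_iff_bijective]
  intro x y h
  exact rk_inj r hlin (congrArg Fin.val h)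

/-- The inverse of the rank function: `einv j` is the element of rank `j`. -/
noncomputable def einv : Fin (m + 1) → Fin (m + 1) :=
  Fintype.bijInv (rkF_bij r hlin)

lemma rkF_einv (j : Fin (m + 1)) : rkF r hlin (einv r hlin j) = j :=
  Fintype.rightInverse_bijInv _ j

lemma einv_rkF (x : Fin (m + 1)) : einv r hlin (rkF r hlin x) = x :=
  Fintype.leftInverse_bijInv _ x

lemma rk_einv (j : Fin (m + 1)) : rk r (einv r hlin j) = (j : ℕ) :=
  congrArg Fin.val (rkF_einv r hlin j)

lemma einv_eq {j : Fin (m + 1)} {z : Fin (m + 1)} (h : rk r z = (j : ℕ)) :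
    einv r hlin j = z := by
  have : rkF r hlin z = j := Fin.ext h
  rw [← this, einv_rkF]

lemma einv_inj : Function.Injective (einv r hlin) := by
  intro a c h
  have := congrArg (rkF r hlin) h
  rwa [rkF_einv, rkF_einv] at this

end Rank

/-- The encoding of a linear order as a sequence of booleans. -/
noncomputable def enc (r : Fin (m + 1) → Fin (m + 1) → Prop)
    (hlin : IsLinearOrder (Fin (m + 1)) r) : Fin m → Bool :=
  fun k => decide (einv r hlin k.succ < einv r hlin 0)

/-- rho as a function to Fin (m+1). -/
noncomputable def rhoF (b : Fin m → Bool) (x : Fin (m + 1)) : Fin (m + 1) :=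
  ⟨rho b x, Nat.lt_succ_of_le (rho_le b x)⟩

lemma rhoF_bij (b : Fin m → Bool) : Function.Bijective (rhoF b) := by
  rw [← Finite.injective_iff_bijective]
  intro x y h
  exact rho_inj b (congrArg Fin.val h)

lemma rk_dec (b : Fin m → Bool) (x : Fin (m + 1)) : rk (dec b) x = rho b x := by
  classical
  have hcard : (univ.filter (fun y => dec b y x ∧ ¬ dec b x y)).card
      = (Finset.Iio (rhoF b x)).card := by
    apply card_bij (fun y _ => rhoF b y)
    · intro y hy
      simp only [mem_filter, mem_univ, true_and, dec, not_le] at hy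
      simp only [mem_Iio, Fin.lt_def, rhoF]
      omega
    · intro y1 h1 y2 h2 h
      exact (rhoF_bij b).1 h
    · intro j hj
      obtain ⟨y, hy⟩ := (rhoF_bij b).2 j
      refine ⟨y, ?_, hy⟩
      simp only [mem_Iio, ← hy, Fin.lt_def, rhoF] at hj
      simp only [mem_filter, mem_univ, true_and, dec, not_le]
      omega
  rw [rk, Finset.filter_congr_decidable, hcard, Fin.card_Iio]
  rfl

lemma rkF_dec (b : Fin m → Bool) : rkF (dec b) (dec_lin b) = rhoF b := by
  funext x
  exact Fin.ext (rk_dec b x)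

lemma enc_dec (b : Fin m → Bool) : enc (dec b) (dec_lin b) = b := by
  funext k
  set e := einv (dec b) (dec_lin b) with hedef
  have he : ∀ (j : Fin (m + 1)) (z : Fin (m + 1)), rho b z = (j : ℕ) → e j = z := by
    intro j z hz
    apply einv_eq
    rw [rk_dec]
    exact hz
  have hv0 : Lf b 0 ≤ m := by have := Lf_add_le b (Nat.zero_le m); omega
  have hv : e 0 = ⟨Lf b 0, by omega⟩ := by
    apply he
    have h1 : Mem b 0 ⟨Lf b 0, by omega⟩ := ⟨le_rfl, by simp⟩
    have := rho_le_of_mem h1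
    simp only [Fin.val_zero]
    omega
  have hkm : (k : ℕ) < m := k.isLt
  have hk1 : (k : ℕ) + 1 ≤ m := hkm
  have hLk1 : Lf b ((k : ℕ) + 1) + ((k : ℕ) + 1) ≤ m := Lf_add_le b hk1
  have hsucc : ((k.succ : Fin (m + 1)) : ℕ) = (k : ℕ) + 1 := rfl
  have hkk : (⟨(k : ℕ), hkm⟩ : Fin m) = k := Fin.ext rfl
  cases hb : b k with
  | true =>
    set y : Fin (m + 1) := ⟨Lf b ((k : ℕ) + 1), by omega⟩ with hydef
    have hyval : (y : ℕ) = Lf b ((k : ℕ) + 1) := rfl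
    have hrho : rho b y = (k : ℕ) + 1 := by
      have h1 : rho b y ≤ (k : ℕ) + 1 := rho_le_of_mem ⟨by omega, by omega⟩
      have h2 : ¬ rho b y ≤ (k : ℕ) := by
        intro h
        obtain ⟨hm1, hm2⟩ := rho_mem b y
        have := Lf_true b hkm (by rw [hkk]; exact hb) h
        omega
      omega
    have hey : e k.succ = y := he k.succ y (by rw [hsucc]; exact hrho)
    have hvval : (e 0 : ℕ) = Lf b 0 := by rw [hv]
    have hlt : y < e 0 := by
      rw [Fin.lt_def, hyval, hvval]
      have := Lf_true b hkm (by rw [hkk]; exact hb) (Nat.zero_le (k : ℕ))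
      omega
    have hgoal : enc (dec b) (dec_lin b) k = decide (e k.succ < e 0) := rfl
    rw [hgoal, hey]
    exact decide_eq_true hlt
  | false =>
    set y : Fin (m + 1) := ⟨Lf b ((k : ℕ) + 1) + ((k : ℕ) + 1), by omega⟩ with hydef
    have hyval : (y : ℕ) = Lf b ((k : ℕ) + 1) + ((k : ℕ) + 1) := rfl
    have hrho : rho b y = (k : ℕ) + 1 := by
      have h1 : rho b y ≤ (k : ℕ) + 1 := rho_le_of_mem ⟨by omega, by omega⟩
      have h2 : ¬ rho b y ≤ (k : ℕ) := by
        intro h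
        obtain ⟨hm1, hm2⟩ := rho_mem b y
        have := Lf_false b hkm (by rw [hkk]; exact hb) h
        omega
      omega
    have hey : e k.succ = y := he k.succ y (by rw [hsucc]; exact hrho)
    have hvval : (e 0 : ℕ) = Lf b 0 := by rw [hv]
    have hlt : ¬ (y < e 0) := by
      rw [Fin.lt_def, not_lt, hyval, hvval]
      have := Lf_false b hkm (by rw [hkk]; exact hb) (Nat.zero_le (k : ℕ))
      omega
    have hgoal : enc (dec b) (dec_lin b) k = decide (e k.succ < e 0) := rfl
    rw [hgoal, hey]
    exact decide_eq_false hlt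

section RightInv

variable (r : Fin (m + 1) → Fin (m + 1) → Prop)
variable (hlin : IsLinearOrder (Fin (m + 1)) r)
variable (hsp : ∀ a b c : Fin (m + 1), a < b → b < c →
    (r b a ∧ ¬ r a b) ∨ (r b c ∧ ¬ r c b))

include hlin hsp in
lemma sp_interval (K : ℕ) (a y c : Fin (m + 1)) (h1 : a < y) (h2 : y < c)
    (ha : rk r a ≤ K) (hc : rk r c ≤ K) : rk r y ≤ K := by
  rcases hsp a y c h1 h2 with ⟨hs1, hs2⟩ | ⟨hs1, hs2⟩
  · have := rk_lt_of_s r hlin hs1 hs2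
    omega
  · have := rk_lt_of_s r hlin hs1 hs2
    omega

include hlin in
lemma Lf_enc_zero : Lf (enc r hlin) 0 = (einv r hlin 0 : ℕ) := by
  rw [Lf, ← Fin.card_Iio (einv r hlin 0)]
  apply card_bij (fun j _ => einv r hlin j.succ)
  · intro j hj
    simp only [mem_filter, mem_univ, true_and, enc, decide_eq_true_eq] at hj
    simpa only [mem_Iio] using hj.2
  · intro j1 h1 j2 h2 h
    exact Fin.succ_injective m (einv_inj r hlin h)
  · intro x hx
    rw [mem_Iio] at hx
    have hne : rkF r hlin x ≠ 0 := by
      intro h0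
      have := einv_rkF r hlin x
      rw [h0] at this
      rw [this] at hx
      exact lt_irrefl _ hx
    obtain ⟨j, hj⟩ := Fin.exists_succ_eq.mpr hne
    have hjx : einv r hlin j.succ = x := by rw [hj, einv_rkF]
    refine ⟨j, ?_, hjx⟩
    simp only [mem_filter, mem_univ, true_and, enc, decide_eq_true_eq]
    exact ⟨Nat.zero_le _, by rw [hjx]; exact hx⟩

include hlin hsp in
lemma main_interval : ∀ k, k ≤ m → ∀ x : Fin (m + 1),
    rk r x ≤ k ↔ (Lf (enc r hlin) k ≤ (x : ℕ) ∧ (x : ℕ) ≤ Lf (enc r hlin) k + k) := by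
  intro k
  induction k with
  | zero =>
    intro _ x
    rw [Lf_enc_zero r hlin]
    constructor
    · intro h
      have h0 : rk r x = 0 := by omega
      have : x = einv r hlin 0 := by
        apply (rk_inj r hlin)
        rw [h0, rk_einv]
        rfl
      rw [this]
      omega
    · intro ⟨h1, h2⟩
      have : x = einv r hlin 0 := Fin.ext (by omega)
      rw [this, rk_einv]
      rfl
  | succ k ih =>
    intro hk1 x
    have hk : k ≤ m := by omega
    have hkm : k < m := by omega
    set b := enc r hlin with hbdef
    set l := Lf b k with hldef
    have hul : l + k ≤ m := Lf_add_le b hk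
    set xx : Fin (m + 1) := einv r hlin ⟨k + 1, by omega⟩ with hxxdef
    have hrkxx : rk r xx = k + 1 := rk_einv r hlin _
    have hxxnot : ¬ (l ≤ (xx : ℕ) ∧ (xx : ℕ) ≤ l + k) := by
      rw [← ih hk]
      omega
    have he0 : rk r (einv r hlin 0) = 0 := rk_einv r hlin _
    have he0mem : l ≤ (einv r hlin 0 : ℕ) ∧ (einv r hlin 0 : ℕ) ≤ l + k :=
      (ih hk _).mp (by omega)
    have hsucc : ((⟨k, hkm⟩ : Fin m).succ : Fin (m + 1)) = ⟨k + 1, by omega⟩ := rfl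
    by_cases hcase : (xx : ℕ) < l
    · -- new element on the left
      have hxl : (xx : ℕ) + 1 = l := by
        by_contra hne
        have h2 : (xx : ℕ) + 1 < l := by omega
        have hbnd : l - 1 < m + 1 := by omega
        set y : Fin (m + 1) := ⟨l - 1, hbnd⟩ with hydef
        have hyval : (y : ℕ) = l - 1 := rfl
        have hy : rk r y ≤ k + 1 := by
          apply sp_interval r hlin hsp (k + 1) xx y (einv r hlin 0)
          · rw [Fin.lt_def, hyval]; omega
          · rw [Fin.lt_def, hyval]; omega
          · omega
          · omega
        have hy2 : rk r y ≠ k + 1 := by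
          intro h
          have hxy : y = xx := rk_inj r hlin (h.trans hrkxx.symm)
          have hcv := congrArg Fin.val hxy
          rw [hyval] at hcv
          omega
        have h3 := (ih hk y).mp (by omega)
        rw [hyval] at h3
        omega
      have hbk : b ⟨k, hkm⟩ = true := by
        rw [hbdef, enc]
        apply decide_eq_true
        rw [hsucc, ← hxxdef, Fin.lt_def]
        omega
      have hstep : l = Lf b (k + 1) + 1 := by
        have := Lf_step b hkm
        rw [if_pos hbk] at this
        omega
      constructor
      · intro hx
        rcases Nat.lt_or_ge (rk r x) (k + 1) with h | h
        · have := (ih hk x).mp (by omega)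
          omega
        · have hxk : rk r x = k + 1 := by omega
          have hxe : x = xx := rk_inj r hlin (hxk.trans hrkxx.symm)
          have := congrArg Fin.val hxe
          omega
      · intro ⟨hx1, hx2⟩
        rcases Nat.lt_or_ge (x : ℕ) l with h | h
        · have hxe : x = xx := Fin.ext (by omega)
          rw [hxe, hrkxx]
        · have := (ih hk x).mpr ⟨h, by omega⟩
          omega
    · -- new element on the right
      have hgt : l + k < (xx : ℕ) := by omega
      have hxr : (xx : ℕ) = l + k + 1 := by
        by_contra hne
        have h2 : l + k + 1 < (xx : ℕ) := by omega
        have hbnd : l + k + 1 < m + 1 := by have := xx.isLt; omega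
        set y : Fin (m + 1) := ⟨l + k + 1, hbnd⟩ with hydef
        have hyval : (y : ℕ) = l + k + 1 := rfl
        have hy : rk r y ≤ k + 1 := by
          apply sp_interval r hlin hsp (k + 1) (einv r hlin 0) y xx
          · rw [Fin.lt_def, hyval]; omega
          · rw [Fin.lt_def, hyval]; omega
          · omega
          · omega
        have hy2 : rk r y ≠ k + 1 := by
          intro h
          have hxy : y = xx := rk_inj r hlin (h.trans hrkxx.symm)
          have hcv := congrArg Fin.val hxy
          rw [hyval] at hcv
          omega
        have h3 := (ih hk y).mp (by omega)
        rw [hyval] at h3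
        omega
      have hbk : b ⟨k, hkm⟩ = false := by
        rw [hbdef, enc]
        apply decide_eq_false
        rw [hsucc, ← hxxdef, Fin.lt_def, not_lt]
        omega
      have hstep : Lf b (k + 1) = l := by
        have := Lf_step b hkm
        rw [if_neg (by simp [hbk])] at this
        omega
      constructor
      · intro hx
        rcases Nat.lt_or_ge (rk r x) (k + 1) with h | h
        · have := (ih hk x).mp (by omega)
          omega
        · have hxk : rk r x = k + 1 := by omega
          have hxe : x = xx := rk_inj r hlin (hxk.trans hrkxx.symm)
          have := congrArg Fin.val hxe
          omega
      · intro ⟨hx1, hx2⟩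
        rcases Nat.lt_or_ge (l + k) (x : ℕ) with h | h
        · have hxe : x = xx := Fin.ext (by omega)
          rw [hxe, hrkxx]
        · have := (ih hk x).mpr ⟨by omega, h⟩
          omega

include hlin hsp in
lemma rho_enc (x : Fin (m + 1)) : rho (enc r hlin) x = rk r x := by
  apply le_antisymm
  · exact rho_le_of_mem
      (show Mem _ _ _ from (main_interval r hlin hsp (rk r x) (rk_le r hlin x) x).mp le_rfl)
  · by_contra h
    push_neg at h
    have hm := rho_mem (enc r hlin) x
    have hle := rho_le (enc r hlin) x
    have := (main_interval r hlin hsp (rho (enc r hlin) x) hle x).mpr ⟨hm.1, hm.2⟩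
    omega

include hlin hsp in
lemma dec_enc : dec (enc r hlin) = r := by
  funext x y
  apply propext
  show rho (enc r hlin) x ≤ rho (enc r hlin) y ↔ r x y
  rw [rho_enc r hlin hsp, rho_enc r hlin hsp]
  exact ⟨(rk_le_iff r hlin).mpr, (rk_le_iff r hlin).mp⟩

end RightInv

end SP6

theorem stmt_6 (n : ℕ) (hn : 1 ≤ n) :
    Nat.card {r : Fin n → Fin n → Prop //
      IsLinearOrder (Fin n) r ∧
      ∀ a b c : Fin n, a < b → b < c →
        (r b a ∧ ¬ r a b) ∨ (r b c ∧ ¬ r c b)} = 2 ^ (n - 1) := by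
  obtain ⟨m, rfl⟩ : ∃ m, n = m + 1 := ⟨n - 1, by omega⟩
  simp only [Nat.add_sub_cancel]
  have hf : Function.Bijective (fun b : Fin m → Bool =>
      (⟨SP6.dec b, SP6.dec_lin b, SP6.dec_sp b⟩ :
        {r : Fin (m + 1) → Fin (m + 1) → Prop //
          IsLinearOrder (Fin (m + 1)) r ∧
          ∀ a b c : Fin (m + 1), a < b → b < c →
            (r b a ∧ ¬ r a b) ∨ (r b c ∧ ¬ r c b)})) := by
    rw [Function.bijective_iff_has_inverse]
    refine ⟨fun p => SP6.enc p.1 p.2.1, ?_, ?_⟩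
    · intro b
      exact SP6.enc_dec b
    · intro p
      exact Subtype.ext (SP6.dec_enc p.1 p.2.1 p.2.2)
  rw [(Nat.card_eq_of_bijective _ hf).symm]
  simp [Nat.card_eq_fintype_card]
end

section
/- The number of associative, quasitrivial, and commutative binary operations F : Xₙ × Xₙ → Xₙ on an n-element set Xₙ is exactly n!. -/
/-!
A commutative, associative, quasitrivial operation `F` is the maximum for the order
`x ≤ y ↔ F x y = y`, which is linear because `F` is quasitrivial. Conversely every linear order
gives such an operation, and on an `n`-element set the linear orders correspond to the
bijections with `Fin n` (their rank functions), of which there are `n!`.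
-/

open Nat

variable {α β : Type*}

def IsAssocQuasitrivialComm (F : α → α → α) : Prop :=
  (∀ x y z, F (F x y) z = F x (F y z)) ∧ (∀ x y, F x y = x ∨ F x y = y) ∧ (∀ x y, F x y = F y x)

def pullbackMax [LinearOrder β] (e : α ≃ β) (x y : α) : α :=
  e.symm (max (e x) (e y))

section pullbackMax

variable [LinearOrder β]

theorem isAssocQuasitrivialComm_pullbackMax (e : α ≃ β) :
    IsAssocQuasitrivialComm (pullbackMax e) := by
  refine ⟨fun x y z => ?_, fun x y => ?_, fun x y => ?_⟩
  · simp only [pullbackMax, Equiv.apply_symm_apply, max_assoc]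
  · rcases max_choice (e x) (e y) with h | h <;> simp [pullbackMax, h]
  · simp only [pullbackMax, max_comm]

theorem pullbackMax_injective [WellFoundedLT β] :
    Function.Injective (pullbackMax : (α ≃ β) → α → α → α) := by
  intro e f hef
  let g : β ≃ β := e.symm.trans f
  have hg_max : ∀ a b, g (max a b) = max (g a) (g b) := fun a b => by
    simpa [pullbackMax, g] using congrArg f (congrFun (congrFun hef (e.symm a)) (e.symm b))
  have hg_le : ∀ {a b}, g a ≤ g b ↔ a ≤ b := by
    intro a b
    rw [← max_eq_right_iff, ← hg_max, g.apply_eq_iff_eq, max_eq_right_iff]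
  -- a well-order has no nontrivial order automorphism
  have hg : (⟨g, hg_le⟩ : β ≃o β) = OrderIso.refl β := Subsingleton.elim _ _
  ext x
  simpa [g] using (DFunLike.congr_fun hg (e x)).symm

end pullbackMax

namespace IsAssocQuasitrivialComm

variable {F : α → α → α}

noncomputable abbrev linearOrder (hF : IsAssocQuasitrivialComm F) : LinearOrder α where
  le x y := F x y = y
  le_refl x := (hF.2.1 x x).elim id id
  le_trans x y z hxy hyz := by
    rw [← hyz, ← hF.1, hxy]
  le_antisymm x y hxy hyx := by
    change F x y = y at hxy
    change F y x = x at hyx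
    rw [← hyx, hF.2.2, hxy]
  le_total x y := (hF.2.1 x y).elim (fun h => Or.inr (hF.2.2 y x ▸ h)) Or.inl
  toDecidableLE := Classical.decRel _

theorem max_linearOrder_eq (hF : IsAssocQuasitrivialComm F) (x y : α) :
    @max α hF.linearOrder.toMax x y = F x y := by
  let := hF.linearOrder
  rcases le_total x y with h | h
  · rw [max_eq_right h]
    exact h.symm
  · rw [max_eq_left h, hF.2.2]
    exact h.symm

theorem exists_eq_pullbackMax [Fintype α] (hF : IsAssocQuasitrivialComm F) :
    ∃ e : α ≃ Fin (Fintype.card α), pullbackMax e = F := by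
  let := hF.linearOrder
  let e : α ≃o Fin (Fintype.card α) := (monoEquivOfFin α rfl).symm
  refine ⟨e.toEquiv, funext₂ fun x y => ?_⟩
  rw [pullbackMax, ← hF.max_linearOrder_eq]
  simp

end IsAssocQuasitrivialComm

theorem card_isAssocQuasitrivialComm [Fintype α] :
    Nat.card {F : α → α → α // IsAssocQuasitrivialComm F} = (Fintype.card α)! := by
  classical
  let Φ : (α ≃ Fin (Fintype.card α)) → {F : α → α → α // IsAssocQuasitrivialComm F} :=
    fun e => ⟨pullbackMax e, isAssocQuasitrivialComm_pullbackMax e⟩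
  have hΦ : Function.Bijective Φ :=
    ⟨fun e f h => pullbackMax_injective (congrArg Subtype.val h),
      fun ⟨F, hF⟩ => hF.exists_eq_pullbackMax.imp fun _ he => Subtype.ext he⟩
  rw [← Nat.card_eq_of_bijective Φ hΦ, Nat.card_eq_fintype_card,
    Fintype.card_equiv (Fintype.equivFin α)]

theorem stmt_7_general (n : ℕ) :
    Nat.card {F : Fin n → Fin n → Fin n //
      (∀ x y z, F (F x y) z = F x (F y z)) ∧
      (∀ x y, F x y = x ∨ F x y = y) ∧
      (∀ x y, F x y = F y x)} = Nat.factorial n := by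
  have := card_isAssocQuasitrivialComm (α := Fin n)
  rwa [Fintype.card_fin] at this

theorem stmt_7 (n : ℕ) (hn : 1 ≤ n) :
    Nat.card {F : Fin n → Fin n → Fin n //
      (∀ x y z, F (F x y) z = F x (F y z)) ∧
      (∀ x y, F x y = x ∨ F x y = y) ∧
      (∀ x y, F x y = F y x)} = Nat.factorial n :=
  stmt_7_general n
end

section
/- Let ≤ be a total ordering on a finite set Xₙ with n elements. The number of binary operations F : Xₙ × Xₙ → Xₙ that are quasitrivial, commutative, and ≤-preserving is exactly 2^(n-1). -/
private abbrev P (n : ℕ) (F : Fin n → Fin n → Fin n) : Prop :=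
  (∀ x y, F x y = x ∨ F x y = y) ∧
  (∀ x y, F x y = F y x) ∧
  (∀ x x' y y', x ≤ x' → y ≤ y' → F x y ≤ F x' y')

private def extendTop (n : ℕ) (F : Fin n → Fin n → Fin n) :
    Fin (n+1) → Fin (n+1) → Fin (n+1) := fun x y =>
  if hx : x = Fin.last n then x
  else if hy : y = Fin.last n then y
  else (F (x.castPred hx) (y.castPred hy)).castSucc

private def extendBot (n : ℕ) (F : Fin n → Fin n → Fin n) :
    Fin (n+1) → Fin (n+1) → Fin (n+1) := fun x y =>
  if hx : x = 0 then x
  else if hy : y = 0 then y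
  else (F (x.pred hx) (y.pred hy)).succ

private theorem P_extendTop (n : ℕ) (F : Fin n → Fin n → Fin n) (hF : P n F) :
    P (n+1) (extendTop n F) := by
  obtain ⟨hq, hc, hm⟩ := hF
  refine ⟨?_, ?_, ?_⟩
  · intro x y
    unfold extendTop
    split
    · left; rfl
    · split
      · right; rfl
      · rcases hq (x.castPred ‹_›) (y.castPred ‹_›) with h | h
        · left; rw [h, Fin.castSucc_castPred]
        · right; rw [h, Fin.castSucc_castPred]
  · intro x y
    by_cases hx : x = Fin.last n <;> by_cases hy : y = Fin.last n
    · rw [hx, hy]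
    · simp [extendTop, hx, hy]
    · simp [extendTop, hx, hy]
    · simp only [extendTop, dif_neg hx, dif_neg hy]
      exact congrArg _ (hc _ _)
  · intro x x' y y' hxx hyy
    by_cases hx' : x' = Fin.last n
    · have h1 : extendTop n F x' y' = Fin.last n := by simp [extendTop, hx']
      rw [h1]; exact Fin.le_last _
    by_cases hy' : y' = Fin.last n
    · have h1 : extendTop n F x' y' = Fin.last n := by simp [extendTop, hx', hy']
      rw [h1]; exact Fin.le_last _
    have hx : x ≠ Fin.last n := by
      intro h; exact hx' (le_antisymm (Fin.le_last _) (h ▸ hxx))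
    have hy : y ≠ Fin.last n := by
      intro h; exact hy' (le_antisymm (Fin.le_last _) (h ▸ hyy))
    simp only [extendTop, dif_neg hx, dif_neg hy, dif_neg hx', dif_neg hy',
      Fin.castSucc_le_castSucc_iff]
    exact hm _ _ _ _ (Fin.castPred_le_castPred_iff.2 hxx) (Fin.castPred_le_castPred_iff.2 hyy)

private theorem P_extendBot (n : ℕ) (F : Fin n → Fin n → Fin n) (hF : P n F) :
    P (n+1) (extendBot n F) := by
  obtain ⟨hq, hc, hm⟩ := hF
  refine ⟨?_, ?_, ?_⟩
  · intro x y
    unfold extendBot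
    split
    · left; rfl
    · split
      · right; rfl
      · rcases hq (x.pred ‹_›) (y.pred ‹_›) with h | h
        · left; rw [h, Fin.succ_pred]
        · right; rw [h, Fin.succ_pred]
  · intro x y
    by_cases hx : x = 0 <;> by_cases hy : y = 0
    · rw [hx, hy]
    · simp [extendBot, hx, hy]
    · simp [extendBot, hx, hy]
    · simp only [extendBot, dif_neg hx, dif_neg hy]
      exact congrArg _ (hc _ _)
  · intro x x' y y' hxx hyy
    by_cases hx : x = 0
    · have h1 : extendBot n F x y = 0 := by simp [extendBot, hx]
      rw [h1]; exact Fin.zero_le _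
    by_cases hy : y = 0
    · have h1 : extendBot n F x y = 0 := by simp [extendBot, hx, hy]
      rw [h1]; exact Fin.zero_le _
    have hx' : x' ≠ 0 := by
      intro h; exact hx (le_antisymm (h ▸ hxx) (Fin.zero_le _))
    have hy' : y' ≠ 0 := by
      intro h; exact hy (le_antisymm (h ▸ hyy) (Fin.zero_le _))
    simp only [extendBot, dif_neg hx, dif_neg hy, dif_neg hx', dif_neg hy',
      Fin.succ_le_succ_iff]
    exact hm _ _ _ _ (Fin.pred_le_pred_iff.2 hxx) (Fin.pred_le_pred_iff.2 hyy)

private def restTop (n : ℕ) (F : Fin (n+1) → Fin (n+1) → Fin (n+1)) :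
    Fin n → Fin n → Fin n := fun x y =>
  if F x.castSucc y.castSucc = x.castSucc then x else y

private theorem restTop_spec (n : ℕ) (F : Fin (n+1) → Fin (n+1) → Fin (n+1))
    (hq : ∀ x y, F x y = x ∨ F x y = y) (x y : Fin n) :
    (restTop n F x y).castSucc = F x.castSucc y.castSucc := by
  unfold restTop
  split
  · exact (‹_› : F _ _ = _).symm
  · rcases hq x.castSucc y.castSucc with h | h
    · exact absurd h ‹_›
    · exact h.symm

private def restBot (n : ℕ) (F : Fin (n+1) → Fin (n+1) → Fin (n+1)) :
    Fin n → Fin n → Fin n := fun x y =>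
  if F x.succ y.succ = x.succ then x else y

private theorem restBot_spec (n : ℕ) (F : Fin (n+1) → Fin (n+1) → Fin (n+1))
    (hq : ∀ x y, F x y = x ∨ F x y = y) (x y : Fin n) :
    (restBot n F x y).succ = F x.succ y.succ := by
  unfold restBot
  split
  · exact (‹_› : F _ _ = _).symm
  · rcases hq x.succ y.succ with h | h
    · exact absurd h ‹_›
    · exact h.symm

private theorem P_restTop (n : ℕ) (F : Fin (n+1) → Fin (n+1) → Fin (n+1))
    (hF : P (n+1) F) : P n (restTop n F) := by
  obtain ⟨hq, hc, hm⟩ := hF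
  refine ⟨?_, ?_, ?_⟩
  · intro x y
    unfold restTop
    split
    · left; rfl
    · right; rfl
  · intro x y
    apply Fin.castSucc_injective
    rw [restTop_spec n F hq, restTop_spec n F hq, hc]
  · intro x x' y y' hxx hyy
    rw [← Fin.castSucc_le_castSucc_iff, restTop_spec n F hq, restTop_spec n F hq]
    exact hm _ _ _ _ (Fin.castSucc_le_castSucc_iff.2 hxx) (Fin.castSucc_le_castSucc_iff.2 hyy)

private theorem P_restBot (n : ℕ) (F : Fin (n+1) → Fin (n+1) → Fin (n+1))
    (hF : P (n+1) F) : P n (restBot n F) := by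
  obtain ⟨hq, hc, hm⟩ := hF
  refine ⟨?_, ?_, ?_⟩
  · intro x y
    unfold restBot
    split
    · left; rfl
    · right; rfl
  · intro x y
    apply Fin.succ_injective
    rw [restBot_spec n F hq, restBot_spec n F hq, hc]
  · intro x x' y y' hxx hyy
    rw [← Fin.succ_le_succ_iff, restBot_spec n F hq, restBot_spec n F hq]
    exact hm _ _ _ _ (Fin.succ_le_succ_iff.2 hxx) (Fin.succ_le_succ_iff.2 hyy)

private theorem extendTop_restTop (n : ℕ) (F : Fin (n+1) → Fin (n+1) → Fin (n+1))
    (hF : P (n+1) F) (htop : F 0 (Fin.last n) = Fin.last n) :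
    extendTop n (restTop n F) = F := by
  obtain ⟨hq, hc, hm⟩ := hF
  have habs : ∀ x, F x (Fin.last n) = Fin.last n := by
    intro x
    have h1 : F 0 (Fin.last n) ≤ F x (Fin.last n) :=
      hm _ _ _ _ (Fin.zero_le _) le_rfl
    rw [htop] at h1
    exact le_antisymm (Fin.le_last _) h1
  funext x y
  unfold extendTop
  split
  · rw [‹x = _›, hc, habs]
  · split
    · rw [‹y = _›, habs]
    · rw [restTop_spec n F hq, Fin.castSucc_castPred, Fin.castSucc_castPred]

private theorem extendBot_restBot (n : ℕ) (F : Fin (n+1) → Fin (n+1) → Fin (n+1))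
    (hF : P (n+1) F) (hbot : F 0 (Fin.last n) = 0) :
    extendBot n (restBot n F) = F := by
  obtain ⟨hq, hc, hm⟩ := hF
  have habs : ∀ y, F 0 y = 0 := by
    intro y
    have h1 : F 0 y ≤ F 0 (Fin.last n) := hm _ _ _ _ le_rfl (Fin.le_last _)
    rw [hbot] at h1
    exact le_antisymm h1 (Fin.zero_le _)
  funext x y
  unfold extendBot
  split
  · rw [‹x = _›, habs]
  · split
    · rw [‹y = _›, hc, habs]
    · rw [restBot_spec n F hq, Fin.succ_pred, Fin.succ_pred]

private theorem extendTop_apply (n : ℕ) (F : Fin n → Fin n → Fin n) (x y : Fin n) :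
    extendTop n F x.castSucc y.castSucc = (F x y).castSucc := by
  unfold extendTop
  rw [dif_neg (Fin.castSucc_lt_last x).ne, dif_neg (Fin.castSucc_lt_last y).ne,
    Fin.castPred_castSucc, Fin.castPred_castSucc]

private theorem extendBot_apply (n : ℕ) (F : Fin n → Fin n → Fin n) (x y : Fin n) :
    extendBot n F x.succ y.succ = (F x y).succ := by
  unfold extendBot
  rw [dif_neg (Fin.succ_ne_zero x), dif_neg (Fin.succ_ne_zero y),
    Fin.pred_succ, Fin.pred_succ]

private theorem extendTop_zero_last (n : ℕ) (hn : 1 ≤ n) (F : Fin n → Fin n → Fin n) :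
    extendTop n F 0 (Fin.last n) = Fin.last n := by
  have h0 : (0 : Fin (n+1)) ≠ Fin.last n := by
    intro h
    have := congrArg Fin.val h
    simp [Fin.last] at this
    omega
  unfold extendTop
  rw [dif_neg h0, dif_pos rfl]

private theorem extendBot_zero_last (n : ℕ) (F : Fin n → Fin n → Fin n) :
    extendBot n F 0 (Fin.last n) = 0 := by
  unfold extendBot
  rw [dif_pos rfl]

private theorem card_succ (n : ℕ) (hn : 1 ≤ n) :
    Nat.card {F // P (n+1) F} = 2 * Nat.card {F // P n F} := by
  have h0last : (0 : Fin (n+1)) ≠ Fin.last n := by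
    intro h
    have := congrArg Fin.val h
    simp [Fin.last] at this
    omega
  let g : Bool × {F // P n F} → {F // P (n+1) F} := fun p =>
    Bool.rec (motive := fun _ => {F // P (n+1) F})
      ⟨extendBot n p.2.1, P_extendBot n p.2.1 p.2.2⟩
      ⟨extendTop n p.2.1, P_extendTop n p.2.1 p.2.2⟩ p.1
  have gtrue : ∀ F, g (true, F) = ⟨extendTop n F.1, P_extendTop n F.1 F.2⟩ := fun _ => rfl
  have gfalse : ∀ F, g (false, F) = ⟨extendBot n F.1, P_extendBot n F.1 F.2⟩ := fun _ => rfl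
  have hg : Function.Bijective g := by
    constructor
    · rintro ⟨b1, F1⟩ ⟨b2, F2⟩ h
      have hval : (g (b1, F1)).1 0 (Fin.last n) = (g (b2, F2)).1 0 (Fin.last n) := by
        rw [h]
      have hb : b1 = b2 := by
        cases b1 <;> cases b2
        · rfl
        · rw [gfalse, gtrue] at hval
          simp only [extendBot_zero_last, extendTop_zero_last n hn] at hval
          exact absurd hval h0last
        · rw [gtrue, gfalse] at hval
          simp only [extendBot_zero_last, extendTop_zero_last n hn] at hval
          exact absurd hval.symm h0last
        · rfl
      subst hb
      have hF : F1.1 = F2.1 := by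
        funext x y
        cases b1
        · rw [gfalse, gfalse] at h
          have h' : extendBot n F1.1 = extendBot n F2.1 := congrArg Subtype.val h
          have := congrFun (congrFun h' x.succ) y.succ
          rw [extendBot_apply, extendBot_apply] at this
          exact Fin.succ_injective _ this
        · rw [gtrue, gtrue] at h
          have h' : extendTop n F1.1 = extendTop n F2.1 := congrArg Subtype.val h
          have := congrFun (congrFun h' x.castSucc) y.castSucc
          rw [extendTop_apply, extendTop_apply] at this
          exact Fin.castSucc_injective _ this
      exact Prod.ext rfl (Subtype.ext hF)
    · rintro ⟨F, hF⟩
      rcases hF.1 0 (Fin.last n) with h | h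
      · refine ⟨(false, ⟨restBot n F, P_restBot n F hF⟩), ?_⟩
        rw [gfalse]
        exact Subtype.ext (extendBot_restBot n F hF h)
      · refine ⟨(true, ⟨restTop n F, P_restTop n F hF⟩), ?_⟩
        rw [gtrue]
        exact Subtype.ext (extendTop_restTop n F hF h)
  rw [← Nat.card_eq_of_bijective g hg, Nat.card_prod]
  simp

private theorem card_base : Nat.card {F // P 1 F} = 1 := by
  rw [Nat.card_eq_one_iff_unique]
  constructor
  · constructor
    rintro ⟨F1, _⟩ ⟨F2, _⟩
    exact Subtype.ext (Subsingleton.elim _ _)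
  · refine ⟨⟨fun x _ => x, ?_, ?_, ?_⟩⟩
    · intro x y; left; rfl
    · intro x y; exact Subsingleton.elim _ _
    · intro _ _ _ _ _ _; exact le_of_eq (Subsingleton.elim _ _)

private theorem key : ∀ m : ℕ, Nat.card {F // P (m+1) F} = 2 ^ m := by
  intro m
  induction m with
  | zero => exact card_base
  | succ k ih =>
    rw [card_succ (k+1) (by omega), ih]
    ring

theorem stmt_8 (n : ℕ) (hn : 1 ≤ n) :
    Nat.card {F : Fin n → Fin n → Fin n //
      (∀ x y, F x y = x ∨ F x y = y) ∧
      (∀ x y, F x y = F y x) ∧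
      (∀ x x' y y', x ≤ x' → y ≤ y' → F x y ≤ F x' y')} = 2 ^ (n - 1) := by
  obtain ⟨m, rfl⟩ : ∃ m, n = m + 1 := ⟨n - 1, by omega⟩
  simpa using key m
end

section
/- Let ≤ be a total ordering on X and ≾ a weak ordering on X that is weakly single-peaked for ≤. Then there are no pairwise distinct a, b, c, d ∈ X such that a ≺ b ∼ c ∼ d. -/
theorem stmt_9 {X : Type*} [Nonempty X] [LinearOrder X]
    (r : X → X → Prop) (htot : ∀ x y, r x y ∨ r y x) (htrans : Transitive r)
    (hwsp : ∀ a b c : X, a < b → b < c →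
      (r b a ∧ ¬ r a b) ∨ (r b c ∧ ¬ r c b) ∨ ((r a b ∧ r b a) ∧ (r b c ∧ r c b))) :
    ¬ ∃ a b c d : X, a ≠ b ∧ a ≠ c ∧ a ≠ d ∧ b ≠ c ∧ b ≠ d ∧ c ≠ d ∧
      (r a b ∧ ¬ r b a) ∧ (r b c ∧ r c b) ∧ (r c d ∧ r d c) := by
  rintro ⟨a, b, c, d, hab, hac, had, hbc, hbd, hcd, ⟨rab, nrba⟩, ⟨rbc, rcb⟩, ⟨rcd, rdc⟩⟩
  -- a ≺ c and a ≺ d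
  have rac : r a c := htrans rab rbc
  have nrca : ¬ r c a := fun h => nrba (htrans rbc h)
  have rad : r a d := htrans rac rcd
  have nrda : ¬ r d a := fun h => nrca (htrans rcd h)
  have rbd : r b d := htrans rbc rcd
  have rdb : r d b := htrans rdc rcb
  -- key: a < x < y, a ≺ x, x ∼ y gives False
  have key : ∀ x y : X, a < x → x < y → r a x → ¬ r x a → r x y → r y x → False := by
    intro x y h1 h2 rax nrxa rxy ryx
    rcases hwsp a x y h1 h2 with ⟨_, h⟩ | ⟨_, h⟩ | ⟨⟨_, h⟩, _⟩
    · exact h rax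
    · exact h ryx
    · exact nrxa h
  have key2 : ∀ x y : X, y < x → x < a → r a x → ¬ r x a → r x y → r y x → False := by
    intro x y h1 h2 rax nrxa rxy ryx
    rcases hwsp y x a h1 h2 with ⟨_, h⟩ | ⟨_, h⟩ | ⟨_, h, _⟩
    · exact h ryx
    · exact h rax
    · exact nrxa h
  -- both above a
  have up : ∀ x y : X, a < x → a < y → x ≠ y →
      r a x → ¬ r x a → r a y → ¬ r y a → r x y → r y x → False := by
    intro x y h1 h2 hne rax nrxa ray nrya rxy ryx
    rcases hne.lt_or_gt with h | h
    · exact key x y h1 h rax nrxa rxy ryx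
    · exact key y x h2 h ray nrya ryx rxy
  have down : ∀ x y : X, x < a → y < a → x ≠ y →
      r a x → ¬ r x a → r a y → ¬ r y a → r x y → r y x → False := by
    intro x y h1 h2 hne rax nrxa ray nrya rxy ryx
    rcases hne.lt_or_gt with h | h
    · exact key2 y x h h2 ray nrya ryx rxy
    · exact key2 x y h h1 rax nrxa rxy ryx
  rcases hab.lt_or_gt with h1 | h1 <;> rcases hac.lt_or_gt with h2 | h2 <;>
    rcases had.lt_or_gt with h3 | h3
  · exact up b c h1 h2 hbc rab nrba rac nrca rbc rcb
  · exact up b c h1 h2 hbc rab nrba rac nrca rbc rcb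
  · exact up b d h1 h3 hbd rab nrba rad nrda rbd rdb
  · exact down c d h2 h3 hcd rac nrca rad nrda rcd rdc
  · exact up c d h2 h3 hcd rac nrca rad nrda rcd rdc
  · exact down b d h1 h3 hbd rab nrba rad nrda rbd rdb
  · exact down b c h1 h2 hbc rab nrba rac nrca rbc rcb
  · exact down b c h1 h2 hbc rab nrba rac nrca rbc rcb
end

section
/- Let ≤ be a total ordering on X with a minimum element a = min X and a maximum element b = max X, and let ≾ be a weak ordering on X that is weakly single-peaked for ≤. If the set M of maximal elements of X for ≾ is not all of X, then M ⊆ {a, b}. -/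
theorem stmt_10 {X : Type*} [Nonempty X] [LinearOrder X]
    (a b : X) (ha : ∀ x, a ≤ x) (hb : ∀ x, x ≤ b)
    (r : X → X → Prop) (htot : ∀ x y, r x y ∨ r y x) (htrans : Transitive r)
    (hwsp : ∀ x y z : X, x < y → y < z →
      (r y x ∧ ¬ r x y) ∨ (r y z ∧ ¬ r z y) ∨ ((r x y ∧ r y x) ∧ (r y z ∧ r z y)))
    (hM : {m : X | ∀ x, r x m} ≠ Set.univ) :
    {m : X | ∀ x, r x m} ⊆ {a, b} := by
  intro m hm
  simp only [Set.mem_setOf_eq] at hm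
  by_contra hmem
  simp only [Set.mem_insert_iff, Set.mem_singleton_iff, not_or] at hmem
  have ham : a < m := lt_of_le_of_ne (ha m) (Ne.symm hmem.1)
  have hmb : m < b := lt_of_le_of_ne (hb m) hmem.2
  rcases hwsp a m b ham hmb with ⟨_, h⟩ | ⟨_, h⟩ | ⟨⟨hram, hrma⟩, ⟨hrmb, hrbm⟩⟩
  · exact h (hm a)
  · exact h (hm b)
  -- get a non-maximal element y
  have : ∃ y, ∃ x, ¬ r x y := by
    by_contra h
    push_neg at h
    exact hM (Set.eq_univ_of_forall fun y => fun x => h y x)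
  obtain ⟨y, x, hxy⟩ := this
  have hmy : ¬ r m y := fun h => hxy (htrans (hm x) h)
  rcases lt_trichotomy y m with hlt | heq | hgt
  · have hay : a < y := lt_of_le_of_ne (ha y) (by rintro rfl; exact hmy hrma)
    rcases hwsp y m b hlt hmb with ⟨h1, _⟩ | ⟨_, h2⟩ | ⟨⟨_, h1⟩, _⟩
    · exact hmy h1
    · exact h2 hrbm
    · exact hmy h1
  · subst heq; exact hmy ((htot y y).elim id id)
  · have hyb : y < b := lt_of_le_of_ne (hb y) (by rintro rfl; exact hmy hrmb)
    rcases hwsp a m y ham hgt with ⟨_, h1⟩ | ⟨h1, _⟩ | ⟨_, ⟨h1, _⟩⟩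
    · exact h1 (hm a)
    · exact hmy h1
    · exact hmy h1
end

section
/- Define u(0)=0, u(1)=1 and u(n+2) = 2·u(n+1) + u(n) + 1 for n ≥ 0. Then for all n ≥ 0, 2·u(n) + 1 = Σ_{k≥0} C(n+1, 2k) · 2^k. -/
private def aS (m : ℕ) : ℕ := ∑ k ∈ Finset.range (m + 1), Nat.choose m (2 * k) * 2 ^ k
private def bS (m : ℕ) : ℕ := ∑ k ∈ Finset.range (m + 1), Nat.choose m (2 * k + 1) * 2 ^ k

private lemma hbS (m : ℕ) : bS (m + 1) = aS m + bS m := by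
  unfold aS bS
  rw [Finset.sum_range_succ]
  have h0 : Nat.choose (m + 1) (2 * (m + 1) + 1) = 0 :=
    Nat.choose_eq_zero_of_lt (by omega)
  rw [h0, ← Finset.sum_add_distrib]
  simp only [zero_mul, add_zero]
  refine Finset.sum_congr rfl fun k _ => ?_
  rw [Nat.choose_succ_succ]
  ring

private lemma haS (m : ℕ) : aS (m + 1) = aS m + 2 * bS m := by
  set T := ∑ k ∈ Finset.range (m + 1), Nat.choose m (2 * k + 2) * 2 ^ (k + 1) with hT
  have key : aS (m + 1) = T + 2 * bS m + 1 := by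
    unfold aS bS
    rw [Finset.sum_range_succ']
    have hc : ∀ k ∈ Finset.range (m + 1),
        Nat.choose (m + 1) (2 * (k + 1)) * 2 ^ (k + 1) =
        Nat.choose m (2 * k + 2) * 2 ^ (k + 1) + Nat.choose m (2 * k + 1) * 2 ^ (k + 1) := by
      intro k _
      rw [show 2 * (k + 1) = (2 * k + 1) + 1 from by ring, Nat.choose_succ_succ]
      ring
    rw [Finset.sum_congr rfl hc, Finset.sum_add_distrib]
    have h2 : ∑ k ∈ Finset.range (m + 1), Nat.choose m (2 * k + 1) * 2 ^ (k + 1) =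
        2 * ∑ k ∈ Finset.range (m + 1), Nat.choose m (2 * k + 1) * 2 ^ k := by
      rw [Finset.mul_sum]
      exact Finset.sum_congr rfl fun k _ => by ring
    rw [h2]
    simp [hT]
  have key2 : aS m = T + 1 := by
    have hT' : T = ∑ k ∈ Finset.range m, Nat.choose m (2 * k + 2) * 2 ^ (k + 1) := by
      rw [hT, Finset.sum_range_succ, Nat.choose_eq_zero_of_lt (by omega), zero_mul, add_zero]
    unfold aS
    rw [Finset.sum_range_succ', hT']
    have hc : ∀ k ∈ Finset.range m,
        Nat.choose m (2 * (k + 1)) * 2 ^ (k + 1) = Nat.choose m (2 * k + 2) * 2 ^ (k + 1) := by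
      intro k _
      rw [show 2 * (k + 1) = 2 * k + 2 from by ring]
    rw [Finset.sum_congr rfl hc]
    simp
  omega

private lemma haS2 (m : ℕ) : aS (m + 2) = 2 * aS (m + 1) + aS m := by
  have h1 : aS (m + 2) = aS (m + 1) + 2 * bS (m + 1) := haS (m + 1)
  have h2 : bS (m + 1) = aS m + bS m := hbS m
  have h3 : aS (m + 1) = aS m + 2 * bS m := haS m
  omega

theorem stmt_12 (u : ℕ → ℕ) (h0 : u 0 = 0) (h1 : u 1 = 1)
    (hrec : ∀ n, u (n + 2) = 2 * u (n + 1) + u n + 1) :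
    ∀ n, 2 * u n + 1 = ∑ k ∈ Finset.range (n + 2), Nat.choose (n + 1) (2 * k) * 2 ^ k := by
  have hA : ∀ n, 2 * u n + 1 = aS (n + 1) := by
    intro n
    induction n using Nat.strong_induction_on with
    | _ n ih =>
      match n with
      | 0 => simp [h0, aS, Finset.sum_range_succ]
      | 1 =>
        simp [h1, aS, Finset.sum_range_succ]
        decide
      | (k + 2) =>
        have i1 : 2 * u k + 1 = aS (k + 1) := ih k (by omega)
        have i2 : 2 * u (k + 1) + 1 = aS (k + 2) := ih (k + 1) (by omega)
        have hh : aS (k + 3) = 2 * aS (k + 2) + aS (k + 1) := haS2 (k + 1)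
        have hkk : aS (k + 2 + 1) = aS (k + 3) := rfl
        rw [hrec k]
        omega
  intro n
  have := hA n
  unfold aS at this
  convert this using 2
end

section
/- Define v(0)=0, v(1)=1, and v(n+2) = 2·v(n+1) + 2·v(n) + 2 for n ≥ 0. Then for all n ≥ 0, 3·v(n) + 2 = Σ_{k≥0} 3^k · (2·C(n,2k) + 3·C(n,2k+1)). -/
open Finset

private def AA (n : ℕ) : ℕ := ∑ k ∈ range (n + 1), 3 ^ k * Nat.choose n (2 * k)
private def BB (n : ℕ) : ℕ := ∑ k ∈ range (n + 1), 3 ^ k * Nat.choose n (2 * k + 1)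

private lemma hBB (n : ℕ) : BB (n + 1) = AA n + BB n := by
  unfold AA BB
  rw [Finset.sum_range_succ (fun k => 3 ^ k * Nat.choose (n + 1) (2 * k + 1)) (n + 1)]
  have hz : Nat.choose (n + 1) (2 * (n + 1) + 1) = 0 :=
    Nat.choose_eq_zero_of_lt (by omega)
  rw [hz, Nat.mul_zero, Nat.add_zero, ← Finset.sum_add_distrib]
  apply Finset.sum_congr rfl
  intro k _
  have : Nat.choose (n + 1) (2 * k + 1) = Nat.choose n (2 * k) + Nat.choose n (2 * k + 1) :=
    Nat.choose_succ_succ n (2 * k)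
  rw [this, Nat.mul_add]

private lemma hAA (n : ℕ) : AA (n + 1) = AA n + 3 * BB n := by
  unfold AA BB
  rw [Finset.sum_range_succ' (fun k => 3 ^ k * Nat.choose (n + 1) (2 * k)) (n + 1)]
  rw [Finset.sum_range_succ' (fun k => 3 ^ k * Nat.choose n (2 * k)) n]
  have h1 : ∀ k, 3 ^ (k + 1) * Nat.choose (n + 1) (2 * (k + 1)) =
      3 ^ (k + 1) * Nat.choose n (2 * k + 1) + 3 ^ (k + 1) * Nat.choose n (2 * (k + 1)) := by
    intro k
    have : 2 * (k + 1) = (2 * k + 1) + 1 := by ring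
    rw [this, Nat.choose_succ_succ n (2 * k + 1), Nat.mul_add]
  simp only [h1]
  rw [Finset.sum_add_distrib]
  have h2 : ∑ k ∈ range (n + 1), 3 ^ (k + 1) * Nat.choose n (2 * (k + 1)) =
      ∑ k ∈ range n, 3 ^ (k + 1) * Nat.choose n (2 * (k + 1)) := by
    rw [Finset.sum_range_succ]
    have : Nat.choose n (2 * (n + 1)) = 0 := Nat.choose_eq_zero_of_lt (by omega)
    rw [this, Nat.mul_zero, Nat.add_zero]
  have h3 : ∑ k ∈ range (n + 1), 3 ^ (k + 1) * Nat.choose n (2 * k + 1) =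
      3 * ∑ k ∈ range (n + 1), 3 ^ k * Nat.choose n (2 * k + 1) := by
    rw [Finset.mul_sum]
    apply Finset.sum_congr rfl
    intro k _
    ring
  rw [h2, h3]
  simp [Nat.choose]
  ring

theorem stmt_15 (v : ℕ → ℕ) (h0 : v 0 = 0) (h1 : v 1 = 1)
    (hrec : ∀ n, v (n + 2) = 2 * v (n + 1) + 2 * v n + 2) :
    ∀ n, 3 * v n + 2 = ∑ k ∈ Finset.range (n + 1),
      3 ^ k * (2 * Nat.choose n (2 * k) + 3 * Nat.choose n (2 * k + 1)) := by
  have hS : ∀ n, (∑ k ∈ Finset.range (n + 1),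
      3 ^ k * (2 * Nat.choose n (2 * k) + 3 * Nat.choose n (2 * k + 1)))
      = 2 * AA n + 3 * BB n := by
    intro n
    unfold AA BB
    rw [Finset.mul_sum, Finset.mul_sum, ← Finset.sum_add_distrib]
    apply Finset.sum_congr rfl
    intro k _
    ring
  have key : ∀ n, (3 * v n + 2 = 2 * AA n + 3 * BB n) ∧
      (3 * v (n + 1) + 2 = 2 * AA (n + 1) + 3 * BB (n + 1)) := by
    intro n
    induction n with
    | zero =>
      constructor <;> simp [AA, BB, h0, h1, Finset.sum_range_succ, Nat.choose]
    | succ n ih =>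
      refine ⟨ih.2, ?_⟩
      have e1 := ih.1
      have e2 := ih.2
      have r := hrec n
      have a1 := hAA n
      have a2 := hAA (n + 1)
      have b1 := hBB n
      have b2 := hBB (n + 1)
      simp only [show ∀ m : ℕ, m + 1 + 1 = m + 2 from fun m => rfl] at *
      omega
  intro n
  rw [hS]
  exact (key n).1
end

section
/- Define q(0)=1 and q(n+1) = (n+1)·q(n) + 2·Σ_{k=0}^{n-1} C(n+1,k)·q(k) for n ≥ 0. Then the exponential generating function Q̂(z) = Σ_{n≥0} q(n)·zⁿ/n! formally satisfies (z + 3 − 2eᶻ)·Q̂(z) = 1. -/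
/-!
Multiplying an exponential generating function by `eᶻ` takes binomial sums of its coefficients.
Hence the coefficient of `z^(n+1)` in `(z + 3 - 2eᶻ) Q̂(z)` is
`(q(n+1) - (n+1) q(n) - 2 ∑_{k<n} C(n+1,k) q(k)) / (n+1)!`, which vanishes by the recurrence,
while the constant coefficient is `3 q(0) - 2 q(0) = 1`.
-/

open PowerSeries Finset Nat

theorem PowerSeries.coeff_exp_mul_mk_div_factorial {K : Type*} [Field K] [Algebra ℚ K]
    (a : ℕ → K) (m : ℕ) :
    coeff m (exp K * mk fun n => a n / n !) = (∑ k ∈ range (m + 1), m.choose k * a k) / m ! := by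
  rw [mul_comm, coeff_mul, Nat.sum_antidiagonal_eq_sum_range_succ
    (fun i j => coeff i (mk fun n => a n / n !) * coeff j (exp K)), sum_div]
  have := algebraRat.charZero K
  refine sum_congr rfl fun k hk => ?_
  rw [coeff_mk, coeff_exp, Nat.cast_choose K (Nat.lt_succ_iff.mp (mem_range.mp hk))]
  simp only [map_div₀, map_one, map_natCast]
  have : (m ! : K) ≠ 0 := Nat.cast_ne_zero.mpr m.factorial_ne_zero
  field_simp

theorem stmt_17 (q : ℕ → ℕ) (h0 : q 0 = 1)
    (hrec : ∀ n, q (n + 1) =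
      (n + 1) * q n + 2 * ∑ k ∈ Finset.range n, Nat.choose (n + 1) k * q k) :
    (PowerSeries.X + 3 - 2 * PowerSeries.exp ℚ) *
      PowerSeries.mk (fun n => (q n : ℚ) / n.factorial) = 1 := by
  rw [← map_ofNat C 3, ← map_ofNat C 2, sub_mul, add_mul, mul_assoc]
  ext (_ | n)
  · norm_num [h0]
  · have hrecQ : (q (n + 1) : ℚ) =
        (n + 1) * q n + 2 * ∑ k ∈ range n, ((n + 1).choose k : ℚ) * q k := by
      exact_mod_cast hrec n
    simp only [map_sub, map_add, coeff_succ_X_mul, coeff_C_mul, coeff_exp_mul_mk_div_factorial,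
      sum_range_succ, coeff_mk, coeff_one, Nat.choose_self, Nat.choose_succ_self_right,
      factorial_succ]
    rw [hrecQ]
    push_cast
    field_simp
    ring
end

section
/- Let ≤ be a total ordering on X and ≾ a weak ordering on X. Then the following condition (a) holds — for all a,b,c with b strictly between a and c in ≤, b ≾ a or b ≾ c — if and only if for every t ∈ X the set {x ∈ X : x ≾ t} is convex for ≤. -/
theorem stmt_18 {X : Type*} [Nonempty X] [LinearOrder X]
    (r : X → X → Prop) (htot : ∀ x y, r x y ∨ r y x) (htrans : Transitive r) :
    (∀ a b c : X, (a < b ∧ b < c) ∨ (c < b ∧ b < a) → r b a ∨ r b c) ↔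
      ∀ t : X, ∀ a b c : X, r a t → r c t →
        (a < b ∧ b < c) ∨ (c < b ∧ b < a) → r b t := by
  constructor
  · intro h t a b c hat hct hb
    rcases h a b c hb with h1 | h1
    · exact htrans h1 hat
    · exact htrans h1 hct
  · intro h a b c hb
    rcases htot a c with h1 | h1
    · exact Or.inr (h c a b c (htrans h1 ((htot c c).elim id id)) ((htot c c).elim id id) hb)
    · exact Or.inl (h a a b c ((htot a a).elim id id) h1 hb)
end

section
/- For integers k ≥ 0 and n ≥ 1, the integral over the unit cube [0,1]ⁿ of (t₁ + ⋯ + tₙ)^k with respect to dt₁⋯dtₙ equals S(k+n, n) / C(k+n, n), where S denotes the Stirling number of the second kind and C the binomial coefficient. -/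
/-! With `F j x = x ^ j / j!` we have `(F (j + 1))' = F j`. Integrating out one coordinate of the
cube turns `G' (c + t)` into the forward difference `G (c + 1) - G c`, and forward differences
commute with differentiation, so by induction on `n` the integral of `F k (t₁ + ⋯ + tₙ)` is the
`n`-th forward difference of `F (k + n)` at `0`, namely
`(k + n)!⁻¹ ∑ᵢ (-1) ^ (n - i) C(n, i) i ^ (k + n) = n! S(k + n, n) / (k + n)!`. -/

open MeasureTheory

/-- The Stirling number of the second kind, via its explicit formula, as a real number. -/
noncomputable def stirling2 (m j : ℕ) : ℝ :=
  (1 / (j.factorial : ℝ)) *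
    ∑ i ∈ Finset.range (j + 1), (-1 : ℝ) ^ (j - i) * (j.choose i : ℝ) * (i : ℝ) ^ m

open Set Nat
open scoped fwdDiff

theorem hasDerivAt_fwdDiff_iter {𝕜 E : Type*} [NontriviallyNormedField 𝕜]
    [NormedAddCommGroup E] [NormedSpace 𝕜 E] {F f : 𝕜 → E} (hF : ∀ x, HasDerivAt F (f x) x)
    (h : 𝕜) (n : ℕ) (x : 𝕜) : HasDerivAt (Δ_[h] ^[n] F) (Δ_[h] ^[n] f x) x := by
  induction n generalizing x with
  | zero => exact hF x
  | succ n ih =>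
    simp only [Function.iterate_succ_apply', fwdDiff]
    exact ((ih (x + h)).comp_add_const x h).sub (ih x)

theorem Continuous.fwdDiff_iter {M G : Type*} [AddCommMonoid M] [TopologicalSpace M]
    [ContinuousAdd M] [AddCommGroup G] [TopologicalSpace G] [IsTopologicalAddGroup G]
    {f : M → G} (hf : Continuous f) (h : M) (n : ℕ) : Continuous (Δ_[h] ^[n] f) := by
  induction n with
  | zero => exact hf
  | succ n ih =>
    rw [Function.iterate_succ_apply']
    exact (ih.comp (continuous_add_const h)).sub ih

theorem integral_Icc_zero_one_comp_add {F f : ℝ → ℝ} (hF : ∀ x, HasDerivAt F (f x) x)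
    (hf : Continuous f) (c : ℝ) :
    ∫ x in Icc (0 : ℝ) 1, f (c + x) = Δ_[1] F c := by
  rw [integral_Icc_eq_integral_Ioc, ← intervalIntegral.integral_of_le zero_le_one,
    intervalIntegral.integral_comp_add_left,
    intervalIntegral.integral_eq_sub_of_hasDerivAt (fun x _ => hF x)
      (hf.intervalIntegrable _ _), add_zero, fwdDiff]

theorem Continuous.integrable_pi_restrict_Icc {ι E : Type*} [Fintype ι] [NormedAddCommGroup E]
    {g : (ι → ℝ) → E}
    (hg : Continuous g) (a b : ℝ) :
    Integrable g (Measure.pi fun _ : ι => volume.restrict (Icc a b)) := by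
  rw [← Measure.restrict_pi_pi, ← volume_pi]
  exact hg.continuousOn.integrableOn_compact (isCompact_univ_pi fun _ => isCompact_Icc)

theorem integral_pi_fin_succ {α E : Type*} [MeasurableSpace α] [NormedAddCommGroup E]
    [NormedSpace ℝ E] {μ : Measure α} [SigmaFinite μ] {n : ℕ} {g : (Fin (n + 1) → α) → E}
    (hg : Integrable g (Measure.pi fun _ => μ)) :
    ∫ t, g t ∂(Measure.pi fun _ => μ) =
      ∫ x, ∫ y, g (Fin.cons x y) ∂(Measure.pi fun _ => μ) ∂μ := by
  have he := (measurePreserving_piFinSuccAbove (fun _ : Fin (n + 1) => μ) 0).symm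
  rw [← he.integral_comp', integral_prod]
  · simp only [MeasurableEquiv.piFinSuccAbove_symm_apply, Fin.insertNthEquiv, Equiv.coe_fn_mk,
      Fin.insertNth_zero, cast_eq]
  · exact (he.integrable_comp_emb (MeasurableEquiv.measurableEmbedding _)).2 hg

theorem integral_pi_Icc_zero_one_comp_add_sum {F : ℕ → ℝ → ℝ}
    (hF : ∀ j x, HasDerivAt (F (j + 1)) (F j x) x) (hF₀ : Continuous (F 0)) (n k : ℕ) (c : ℝ) :
    ∫ t, F k (c + ∑ i, t i) ∂(Measure.pi fun _ : Fin n => volume.restrict (Icc 0 1)) =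
      Δ_[1] ^[n] (F (k + n)) c := by
  have hcont : ∀ j, Continuous (F j)
    | 0 => hF₀
    | j + 1 => continuous_iff_continuousAt.2 fun x => (hF j x).continuousAt
  induction n generalizing c with
  | zero => rw [Measure.pi_of_empty]; simp
  | succ n ih =>
    have hFk := hcont k
    have hint : Continuous fun t : Fin (n + 1) → ℝ => F k (c + ∑ i, t i) := by fun_prop
    rw [integral_pi_fin_succ (hint.integrable_pi_restrict_Icc 0 1)]
    simp only [Fin.sum_cons, ← add_assoc, ih, Function.iterate_succ_apply']
    exact integral_Icc_zero_one_comp_add (hasDerivAt_fwdDiff_iter (hF _) 1 n)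
      ((hcont _).fwdDiff_iter 1 n) c

theorem hasDerivAt_pow_div_factorial (j : ℕ) (x : ℝ) :
    HasDerivAt (fun x : ℝ => x ^ (j + 1) / (j + 1)!) (x ^ j / j !) x := by
  refine ((hasDerivAt_pow (j + 1) x).div_const ((j + 1)! : ℝ)).congr_deriv ?_
  push_cast [Nat.factorial_succ, Nat.add_sub_cancel]
  field_simp

theorem fwdDiff_iter_pow_div_factorial_zero (m n : ℕ) :
    Δ_[1] ^[n] (fun x : ℝ => x ^ m / m !) 0 = n ! / m ! * stirling2 m n := by
  rw [fwdDiff_iter_eq_sum_shift, stirling2]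
  simp only [zsmul_eq_mul, nsmul_eq_mul, zero_add, mul_one, Int.cast_mul, Int.cast_pow,
    Int.cast_neg, Int.cast_one, Int.cast_natCast, Finset.mul_sum]
  refine Finset.sum_congr rfl fun i _ => ?_
  field_simp

theorem stmt_19_general (k n : ℕ) :
    ∫ t in (Set.univ.pi fun _ : Fin n => Set.Icc (0 : ℝ) 1), (∑ i, t i) ^ k =
      stirling2 (k + n) n / ((k + n).choose n : ℝ) := by
  rw [volume_pi, Measure.restrict_pi_pi]
  calc _ = k ! * ∫ t, (0 + ∑ i, t i) ^ k / k !
        ∂(Measure.pi fun _ : Fin n => volume.restrict (Icc (0 : ℝ) 1)) := by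
          rw [← integral_const_mul]
          congr with t
          rw [zero_add]
          field_simp
    _ = k ! * (n ! / (k + n)! * stirling2 (k + n) n) := by
          rw [integral_pi_Icc_zero_one_comp_add_sum (F := fun j x => x ^ j / j !)
            hasDerivAt_pow_div_factorial (by fun_prop) n k 0,
            fwdDiff_iter_pow_div_factorial_zero]
    _ = _ := by
          rw [← Nat.add_choose_mul_factorial_mul_factorial k n]
          push_cast
          field_simp

theorem stmt_19 (k n : ℕ) (hn : 1 ≤ n) :
    ∫ t in (Set.univ.pi fun _ : Fin n => Set.Icc (0 : ℝ) 1), (∑ i, t i) ^ k =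
      stirling2 (k + n) n / ((k + n).choose n : ℝ) :=
  stmt_19_general k n
end
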